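/- Let k be a field of characteristic ≠ 2 and a,b,c ∈ k^×, and consider the k-involution σ of k(x,y,z) given by σ(x) = −x, σ(y) = a/y, σ(z) = (−b x² + c)/z. Then the fixed field k(x,y,z)^{⟨σ⟩} equals k(z0,z1,z2,z3) where the generators satisfy the single relation z0² = (z1² − a)(z2² − b)(z3² − c). -/

import Mathlib

noncomputable section

namespace Paper

open Function

variable {G : Type} [Group G]

/-- The Tate cohomology `Ĥ⁻¹` of a finite group acting on a `ℤ`-module vanishes:
every element killed by the norm map lies in the augmentation submodule. -/
def Hneg1Vanish [Finite G] {M : Type} [AddCommGroup M] [Module ℤ M]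
    (ρ : Representation ℤ G M) : Prop :=
  ∀ m : M, (∑ᶠ g : G, ρ g m) = 0 →
    m ∈ Submodule.span ℤ {x : M | ∃ (g : G) (y : M), x = ρ g y - y}

/-- The Tate cohomology `Ĥ⁰` vanishes: every invariant element is a norm. -/
def Hhat0Vanish [Finite G] {M : Type} [AddCommGroup M] [Module ℤ M]
    (ρ : Representation ℤ G M) : Prop :=
  ∀ m : M, (∀ g : G, ρ g m = m) → ∃ y : M, m = ∑ᶠ g : G, ρ g y

/-- `H¹` vanishes: every inhomogeneous 1-cocycle is a 1-coboundary. -/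
def H1Vanish {M : Type} [AddCommGroup M] [Module ℤ M]
    (ρ : Representation ℤ G M) : Prop :=
  ∀ f : G → M, (∀ g h : G, f (g * h) = ρ g (f h) + f g) →
    ∃ m : M, ∀ g : G, f g = ρ g m - m

/-- A `G`-lattice: a finitely generated `ℤ`-free module with a `G`-action. -/
structure GLat (G : Type) [Group G] : Type 1 where
  carrier : Type
  [ab : AddCommGroup carrier]
  [mod : Module ℤ carrier]
  [free : Module.Free ℤ carrier]
  [fin : Module.Finite ℤ carrier]
  ρ : Representation ℤ G carrier

attribute [instance] GLat.ab GLat.mod GLat.free GLat.fin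

attribute [local instance 2000] Prod.instModule

instance : CoeSort (GLat G) Type := ⟨GLat.carrier⟩

/-- Build a `G`-lattice from a representation on a finite free `ℤ`-module. -/
def ofRep (M : Type) [AddCommGroup M] [Module ℤ M] [Module.Free ℤ M] [Module.Finite ℤ M]
    (ρ : Representation ℤ G M) : GLat G :=
  { carrier := M, ρ := ρ }

namespace GLat

/-- Direct sum of two `G`-lattices. -/
def sum (M N : GLat G) : GLat G where
  carrier := M.carrier × N.carrier
  ab := Prod.instAddCommGroup
  mod := Prod.instModule
  free := Module.Free.prod ℤ M.carrier N.carrier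
  fin := Module.Finite.prod
  ρ :=
    { toFun := fun g => (M.ρ g).prodMap (N.ρ g)
      map_one' := by
        letI : Module ℤ (M.carrier × N.carrier) := Prod.instModule
        refine LinearMap.ext fun x => ?_
        simp
      map_mul' := fun g h => by
        letI : Module ℤ (M.carrier × N.carrier) := Prod.instModule
        refine LinearMap.ext fun x => ?_
        simp }

/-- Equivariant isomorphism of `G`-lattices. -/
def Iso (M N : GLat G) : Prop :=
  ∃ e : M.carrier ≃ₗ[ℤ] N.carrier, ∀ (g : G) (m : M.carrier), e (M.ρ g m) = N.ρ g (e m)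

/-- A `ℤ`-linear map of `G`-lattices is equivariant. -/
def IsEquivariant (M N : GLat G) (f : M.carrier →ₗ[ℤ] N.carrier) : Prop :=
  ∀ (g : G) (m : M.carrier), f (M.ρ g m) = N.ρ g (f m)

/-- A permutation `G`-lattice: it has a `ℤ`-basis permuted by `G`. -/
def IsPermutation (M : GLat G) : Prop :=
  ∃ (ι : Type) (_ : Fintype ι) (b : Module.Basis ι ℤ M.carrier) (σ : G →* Equiv.Perm ι),
    ∀ (g : G) (i : ι), M.ρ g (b i) = b (σ g i)

/-- A stably permutation `G`-lattice. -/
def IsStablyPermutation (M : GLat G) : Prop :=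
  ∃ P Q : GLat G, P.IsPermutation ∧ Q.IsPermutation ∧ (M.sum P).Iso Q

/-- An invertible `G`-lattice: a direct summand of a permutation lattice. -/
def IsInvertible (M : GLat G) : Prop :=
  ∃ N Q : GLat G, Q.IsPermutation ∧ (M.sum N).Iso Q

/-- Flabby: `Ĥ⁻¹(H, M) = 0` for every subgroup `H ≤ G`. -/
def IsFlabby [Finite G] (M : GLat G) : Prop :=
  ∀ H : Subgroup G, Hneg1Vanish (MonoidHom.comp M.ρ H.subtype)

/-- Coflabby: `H¹(H, M) = 0` for every subgroup `H ≤ G`. -/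
def IsCoflabby (M : GLat G) : Prop :=
  ∀ H : Subgroup G, H1Vanish (MonoidHom.comp M.ρ H.subtype)

/-- Restriction of a `G`-lattice to a subgroup `H`. -/
def res (H : Subgroup G) (M : GLat G) : GLat H :=
  { carrier := M.carrier, ρ := MonoidHom.comp M.ρ H.subtype }

end GLat

/-- A flabby resolution `0 → M → P → F → 0` of a `G`-lattice `M`:
`P` is permutation and `F` is flabby. -/
structure FlabbyResolution [Finite G] (M : GLat G) : Type 1 where
  P : GLat G
  F : GLat G
  incl : M.carrier →ₗ[ℤ] P.carrier
  proj : P.carrier →ₗ[ℤ] F.carrier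
  equiv_incl : GLat.IsEquivariant M P incl
  equiv_proj : GLat.IsEquivariant P F proj
  inj : Function.Injective incl
  surj : Function.Surjective proj
  exact : LinearMap.range incl = LinearMap.ker proj
  permP : P.IsPermutation
  flabbyF : F.IsFlabby

/-- The flabby class `[M]^{fl}` is zero: the flabby part of a flabby resolution
is stably permutation. -/
def FlabbyClassZero [Finite G] (M : GLat G) : Prop :=
  ∃ R : FlabbyResolution M, R.F.IsStablyPermutation

/-- The flabby class `[M]^{fl}` is invertible. -/
def FlabbyClassInvertible [Finite G] (M : GLat G) : Prop :=
  ∃ R : FlabbyResolution M, R.F.IsInvertible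

/-- The permutation `G`-lattice `ℤ[S]` on a finite `G`-set `S`. -/
def ofMulActionGLat (G : Type) [Group G] (S : Type) [MulAction G S] [Finite S] : GLat G :=
  letI : Fintype S := Fintype.ofFinite S
  { carrier := S →₀ ℤ
    fin := Module.Finite.equiv (Finsupp.linearEquivFunOnFinite ℤ ℤ S).symm
    ρ :=
      { toFun := fun g => Finsupp.lmapDomain ℤ ℤ (g • ·)
        map_one' := by ext x y; simp
        map_mul' := fun x y => by ext z w; simp [mul_smul] } }

/-- The trivial rank-one `G`-lattice `ℤ`. -/
def trivialGLat (G : Type) [Group G] : GLat G :=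
  { carrier := ℤ, ρ := (1 : Representation ℤ G ℤ) }

end Paper

/-!
From `σy = a/y` and `σz = (c - bx²)/z` we get `y·σy = a` and `z·σz = c - bx²`, so `σ` swaps `y`
with `σy` and `z` with `σz`. Then `z₁ = (y + σy)/2`, `z₃ = (z + σz)/2`, `z₂ = (z - σz)/(2x)` and
`z₀ = ((y - σy)/2)(z₃² - c)/x` are `σ`-invariant, and the relation comes from
`z₁² - a = ((y - σy)/2)²` and `z₃² - c = x²(z₂² - b)`.

Over `L = k(z₀, z₁, z₂, z₃)` the element `y` is a root of `T² - 2z₁T + a`, while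
`x = (y - z₁)(z₃² - c)/z₀` and `z = z₃ + xz₂`; hence `K = L(y) = L + Ly`. An invariant `p + qy`
with `p, q ∈ L` has `q(σy - y) = 0`, and `σy ≠ y`, so the fixed field is `L`. Transcendence of `y`
over `k` gives `σy ≠ y`, and transcendence of `z` over `k[x]` gives `z₃² ≠ c`, so `z₀ ≠ 0`.
-/

open IntermediateField

open Polynomial in
theorem Transcendental.sq_add_mul_add_ne_zero {R A : Type*} [CommRing R] [Nontrivial R]
    [CommRing A] [Algebra R A] {t : A} (ht : Transcendental R t) (p q : R) :
    t ^ 2 + algebraMap R A p * t + algebraMap R A q ≠ 0 := fun h ↦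
  ht ⟨X ^ 2 + C p * X + C q, (by monicity! : Monic _).ne_zero, by simpa using h⟩

open Polynomial in
theorem IntermediateField.exists_eq_add_mul_of_mem_adjoin_simple {F E : Type*} [Field F]
    [Field E] [Algebra F E] {y : E} {s t : F}
    (hy : y ^ 2 = algebraMap F E s * y + algebraMap F E t) {u : E} (hu : u ∈ F⟮y⟯) :
    ∃ p q : F, u = algebraMap F E p + algebraMap F E q * y := by
  have hint : IsIntegral F y := ⟨X ^ 2 - C s * X - C t, by monicity!, by simp [hy]⟩
  rw [← mem_toSubalgebra, adjoin_simple_toSubalgebra_of_isAlgebraic hint.isAlgebraic] at hu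
  induction hu using Algebra.adjoin_induction with
  | mem _ h => exact ⟨0, 1, by simp [Set.mem_singleton_iff.1 h]⟩
  | algebraMap r => exact ⟨r, 0, by simp⟩
  | add _ _ _ _ h₁ h₂ =>
    obtain ⟨p, q, rfl⟩ := h₁
    obtain ⟨p', q', rfl⟩ := h₂
    exact ⟨p + p', q + q', by simp only [map_add]; ring⟩
  | mul _ _ _ _ h₁ h₂ =>
    obtain ⟨p, q, rfl⟩ := h₁
    obtain ⟨p', q', rfl⟩ := h₂
    refine ⟨p * p' + q * q' * t, p * q' + q * p' + q * q' * s, ?_⟩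
    simp only [map_add, map_mul]
    linear_combination (algebraMap F E q * algebraMap F E q') * hy

section Involution

variable {k K : Type*} [Field k] [Field K] [Algebra k K] (σ : K ≃ₐ[k] K)

theorem AlgEquiv.apply_apply_eq_of_mul_apply_eq {z d : K} (hz : z ≠ 0) (h : z * σ z = d)
    (hd : σ d = d) : σ (σ z) = z := by
  apply mul_left_cancel₀ ((map_ne_zero σ).2 hz)
  rw [← map_mul, h, hd, ← h, mul_comm]

theorem IntermediateField.mem_fixedField_zpowers_iff {u : K} :
    u ∈ fixedField (Subgroup.zpowers σ) ↔ σ u = u := by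
  simpa [Subgroup.forall_mem_zpowers, MulAction.mem_fixedBy, AlgEquiv.smul_def] using
    MulAction.mem_fixedBy_zpowers_iff_mem_fixedBy (α := K) (g := σ) (a := u)

theorem IntermediateField.fixedField_zpowers_eq_of_sq_eq {L : IntermediateField k K}
    (hL : L ≤ fixedField (Subgroup.zpowers σ)) {y s t : K} (hs : s ∈ L) (ht : t ∈ L)
    (hy : y ^ 2 = s * y + t) (hσy : σ y ≠ y) (htop : L⟮y⟯ = ⊤) :
    fixedField (Subgroup.zpowers σ) = L := by
  refine le_antisymm (fun u hu ↦ ?_) hL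
  obtain ⟨p, q, rfl⟩ := exists_eq_add_mul_of_mem_adjoin_simple (s := ⟨s, hs⟩) (t := ⟨t, ht⟩) hy
    (htop ▸ mem_top : u ∈ L⟮y⟯)
  have hp := (mem_fixedField_zpowers_iff σ).1 (hL p.2)
  have hq := (mem_fixedField_zpowers_iff σ).1 (hL q.2)
  rw [mem_fixedField_zpowers_iff, map_add, map_mul] at hu
  simp only [algebraMap_apply] at hu ⊢
  rw [hp, hq, add_right_inj] at hu
  have hq0 : (q : K) = 0 := by
    by_contra hne
    exact hσy (mul_left_cancel₀ hne hu)
  simp [hq0]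

end Involution

namespace Paper

namespace Yamasaki

variable {k K : Type*} [Field k] [Field K] [Algebra k K] (σ : K ≃ₐ[k] K) (a b c : k) (x y z : K)

def z1 : K := (y + σ y) / 2

def z2 : K := (z - σ z) / (2 * x)

def z3 : K := (z + σ z) / 2

def z0 : K := (y - σ y) / 2 * (z3 σ z ^ 2 - algebraMap k K c) / x

variable {σ a b c x y z}

theorem z1_mem_fixedField (hy : σ (σ y) = y) : z1 σ y ∈ fixedField (Subgroup.zpowers σ) := by
  rw [mem_fixedField_zpowers_iff, z1, map_div₀, map_add, hy, map_ofNat, add_comm]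

theorem z2_mem_fixedField (hx : σ x = -x) (hz : σ (σ z) = z) :
    z2 σ x z ∈ fixedField (Subgroup.zpowers σ) := by
  rw [mem_fixedField_zpowers_iff, z2, map_div₀, map_sub, map_mul, hz, hx, map_ofNat, mul_neg,
    div_neg, ← neg_div, neg_sub]

theorem z3_mem_fixedField (hz : σ (σ z) = z) : z3 σ z ∈ fixedField (Subgroup.zpowers σ) := by
  rw [mem_fixedField_zpowers_iff, z3, map_div₀, map_add, hz, map_ofNat, add_comm]

theorem z0_mem_fixedField (hx : σ x = -x) (hy : σ (σ y) = y) (hz : σ (σ z) = z) :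
    z0 σ c x y z ∈ fixedField (Subgroup.zpowers σ) := by
  have h3 := (mem_fixedField_zpowers_iff σ).1 (z3_mem_fixedField hz)
  rw [mem_fixedField_zpowers_iff, z0, map_div₀, map_mul, map_div₀, map_sub, map_sub, map_pow, hy,
    h3, hx, map_ofNat, AlgEquiv.commutes]
  ring

theorem adjoin_le_fixedField (hx : σ x = -x) (hy : σ (σ y) = y) (hz : σ (σ z) = z) :
    adjoin k {z0 σ c x y z, z1 σ y, z2 σ x z, z3 σ z} ≤ fixedField (Subgroup.zpowers σ) := by
  simp only [adjoin_le_iff, Set.insert_subset_iff, Set.singleton_subset_iff, SetLike.mem_coe]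
  exact ⟨z0_mem_fixedField hx hy hz, z1_mem_fixedField hy, z2_mem_fixedField hx hz,
    z3_mem_fixedField hz⟩

theorem z0_sq (h2 : (2 : K) ≠ 0) (hx0 : x ≠ 0) (hy : y * σ y = algebraMap k K a)
    (hz : z * σ z = algebraMap k K c - algebraMap k K b * x ^ 2) :
    z0 σ c x y z ^ 2 = (z1 σ y ^ 2 - algebraMap k K a) * (z2 σ x z ^ 2 - algebraMap k K b) *
      (z3 σ z ^ 2 - algebraMap k K c) := by
  simp only [z0, z1, z2, z3]
  rw [← hy, show algebraMap k K c = z * σ z + algebraMap k K b * x ^ 2 by rw [hz]; ring]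
  field_simp
  ring

theorem z3_sq_sub_ne_zero (h2 : (2 : K) ≠ 0) (hT : Transcendental (Algebra.adjoin k {x}) z)
    (hz : z * σ z = algebraMap k K c - algebraMap k K b * x ^ 2) :
    z3 σ z ^ 2 - algebraMap k K c ≠ 0 := by
  have hz0 : z ≠ 0 := fun h ↦ hT (h ▸ isAlgebraic_zero)
  -- `4z²(z₃² - c)` is a monic quadratic in `z²` over `k[x]`
  let xR : Algebra.adjoin k {x} := ⟨x, Algebra.self_mem_adjoin_singleton k x⟩
  let C : k → Algebra.adjoin k {x} := algebraMap k _
  have hquartic := (hT.pow two_pos).sq_add_mul_add_ne_zero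
    (-2 * (C c + C b * xR ^ 2)) ((C c - C b * xR ^ 2) ^ 2)
  simp only [C, map_mul, map_add, map_sub, map_neg, map_pow, map_ofNat,
    ← IsScalarTower.algebraMap_apply, show algebraMap (Algebra.adjoin k {x}) K xR = x from rfl]
    at hquartic
  have hσz : σ z = (algebraMap k K c - algebraMap k K b * x ^ 2) / z := by
    rw [eq_div_iff hz0, mul_comm, hz]
  rw [z3, hσz]
  intro h
  apply hquartic
  field_simp at h
  linear_combination h

theorem z0_ne_zero (h2 : (2 : K) ≠ 0) (hx0 : x ≠ 0) (hσy : σ y ≠ y)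
    (h3 : z3 σ z ^ 2 - algebraMap k K c ≠ 0) : z0 σ c x y z ≠ 0 := by
  simp [z0, sub_ne_zero.2 hσy.symm, h2, h3, hx0]

theorem x_eq (h2 : (2 : K) ≠ 0) (hx0 : x ≠ 0) (hz0 : z0 σ c x y z ≠ 0) :
    x = (y - z1 σ y) * ((z3 σ z ^ 2 - algebraMap k K c) / z0 σ c x y z) := by
  rw [eq_comm, ← mul_div_assoc, div_eq_iff hz0, z0, z1]
  field_simp
  ring

theorem z_eq (h2 : (2 : K) ≠ 0) (hx0 : x ≠ 0) : z = z3 σ z + x * z2 σ x z := by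
  rw [z3, z2]
  field_simp
  ring

theorem adjoin_y_eq_top (h2 : (2 : K) ≠ 0) (hx0 : x ≠ 0) (hz0 : z0 σ c x y z ≠ 0)
    (hgen : adjoin k {x, y, z} = ⊤) :
    (adjoin k {z0 σ c x y z, z1 σ y, z2 σ x z, z3 σ z})⟮y⟯ = ⊤ := by
  set L := adjoin k {z0 σ c x y z, z1 σ y, z2 σ x z, z3 σ z}
  have hL : ∀ u ∈ L, u ∈ L⟮y⟯ := fun u hu ↦ L⟮y⟯.algebraMap_mem ⟨u, hu⟩
  have hgens : ({z0 σ c x y z, z1 σ y, z2 σ x z, z3 σ z} : Set K) ⊆ L⟮y⟯ :=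
    fun u hu ↦ hL u (subset_adjoin k _ hu)
  simp only [Set.insert_subset_iff, Set.singleton_subset_iff, SetLike.mem_coe] at hgens
  obtain ⟨h₀, h₁, h₂, h₃⟩ := hgens
  have hy : y ∈ L⟮y⟯ := mem_adjoin_simple_self L y
  have hx : x ∈ L⟮y⟯ := by
    have hc : algebraMap k K c ∈ L⟮y⟯ := hL _ (L.algebraMap_mem c)
    have := mul_mem (sub_mem hy h₁) (div_mem (sub_mem (pow_mem h₃ 2) hc) h₀)
    rwa [← x_eq h2 hx0 hz0] at this
  have hz : z ∈ L⟮y⟯ := by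
    have := add_mem h₃ (mul_mem hx h₂)
    rwa [← z_eq (σ := σ) h2 hx0] at this
  rw [← restrictScalars_eq_top_iff (K := k), eq_top_iff, ← hgen, adjoin_le_iff]
  simp only [Set.insert_subset_iff, Set.singleton_subset_iff, SetLike.mem_coe, mem_restrictScalars]
  exact ⟨hx, hy, hz⟩

theorem fixedField_eq_adjoin (h2 : (2 : K) ≠ 0) (hx0 : x ≠ 0) (hσx : σ x = -x)
    (hyy : σ (σ y) = y) (hzz : σ (σ z) = z) (hy : y * σ y = algebraMap k K a) (hσy : σ y ≠ y)
    (h3 : z3 σ z ^ 2 - algebraMap k K c ≠ 0) (hgen : adjoin k {x, y, z} = ⊤) :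
    fixedField (Subgroup.zpowers σ) = adjoin k {z0 σ c x y z, z1 σ y, z2 σ x z, z3 σ z} := by
  refine fixedField_zpowers_eq_of_sq_eq σ (adjoin_le_fixedField hσx hyy hzz)
    (mul_mem (ofNat_mem _ 2) (subset_adjoin k _ (Set.mem_insert_of_mem _ (Set.mem_insert _ _))))
    (neg_mem (IntermediateField.algebraMap_mem _ a)) ?_ hσy
    (adjoin_y_eq_top h2 hx0 (z0_ne_zero h2 hx0 hσy h3) hgen)
  rw [z1, mul_div_cancel₀ _ h2, ← hy]
  ring

end Yamasaki

theorem fixed_field_of_involution_yamasaki_general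
    (k K : Type) [Field k] [Field K] [Algebra k K] (h2 : (2 : k) ≠ 0)
    (a b c : k)
    (x y z : K)
    (hind : AlgebraicIndependent k ![x, y, z])
    (hgen : IntermediateField.adjoin k ({x, y, z} : Set K) = ⊤)
    (σ : K ≃ₐ[k] K)
    (hσx : σ x = -x)
    (hσy : σ y = algebraMap k K a / y)
    (hσz : σ z = (-(algebraMap k K b) * x ^ 2 + algebraMap k K c) / z) :
    ∃ z0 z1 z2 z3 : K,
      IntermediateField.adjoin k ({z0, z1, z2, z3} : Set K) =
        IntermediateField.fixedField (Subgroup.zpowers σ) ∧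
      z0 ^ 2 = (z1 ^ 2 - algebraMap k K a) * (z2 ^ 2 - algebraMap k K b) *
        (z3 ^ 2 - algebraMap k K c) := by
  have h2K : (2 : K) ≠ 0 := map_ofNat (algebraMap k K) 2 ▸ (map_ne_zero _).2 h2
  have hTx : Transcendental k x := by simpa using hind.transcendental 0
  have hTy : Transcendental k y := by simpa using hind.transcendental 1
  have hTz : Transcendental (Algebra.adjoin k {x}) z := by
    have := hind.transcendental_adjoin (s := {0}) (i := 2) (by decide)
    rwa [Set.image_singleton, Matrix.cons_val_zero] at this
  have hx0 : x ≠ 0 := fun h ↦ hTx (h ▸ isAlgebraic_zero)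
  have hy0 : y ≠ 0 := fun h ↦ hTy (h ▸ isAlgebraic_zero)
  have hz0 : z ≠ 0 := fun h ↦ hTz (h ▸ isAlgebraic_zero)
  have hy : y * σ y = algebraMap k K a := by rw [hσy, mul_div_cancel₀ _ hy0]
  have hz : z * σ z = algebraMap k K c - algebraMap k K b * x ^ 2 := by
    rw [hσz, mul_div_cancel₀ _ hz0]
    ring
  have hσy_ne : σ y ≠ y := fun h ↦
    hTy.sq_add_mul_add_ne_zero 0 (-a) (by rw [map_zero, map_neg, ← hy, h]; ring)
  refine ⟨_, _, _, _, (Yamasaki.fixedField_eq_adjoin h2K hx0 hσx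
    (σ.apply_apply_eq_of_mul_apply_eq hy0 hy (σ.commutes a))
    (σ.apply_apply_eq_of_mul_apply_eq hz0 hz (by simp [hσx])) hy hσy_ne
    (Yamasaki.z3_sq_sub_ne_zero h2K hTz hz) hgen).symm, Yamasaki.z0_sq h2K hx0 hy hz⟩

/-- Yamasaki, Lemma 4.3(i). Let `k` be a field of characteristic `≠ 2`,
`K = k(x,y,z)` a rational function field in three variables, and `σ` the `k`-involution
with `σx = −x`, `σy = a/y`, `σz = (−bx²+c)/z` (`a,b,c ∈ kˣ`). Then the fixed field of
`σ` is `k(z₀,z₁,z₂,z₃)` with the single relation `z₀² = (z₁²−a)(z₂²−b)(z₃²−c)`. -/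
theorem fixed_field_of_involution_yamasaki
    (k K : Type) [Field k] [Field K] [Algebra k K] (h2 : (2 : k) ≠ 0)
    (a b c : k) (ha : a ≠ 0) (hb : b ≠ 0) (hc : c ≠ 0)
    (x y z : K)
    (hind : AlgebraicIndependent k ![x, y, z])
    (hgen : IntermediateField.adjoin k ({x, y, z} : Set K) = ⊤)
    (σ : K ≃ₐ[k] K)
    (hσx : σ x = -x)
    (hσy : σ y = algebraMap k K a / y)
    (hσz : σ z = (-(algebraMap k K b) * x ^ 2 + algebraMap k K c) / z) :
    ∃ z0 z1 z2 z3 : K,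
      IntermediateField.adjoin k ({z0, z1, z2, z3} : Set K) =
        IntermediateField.fixedField (Subgroup.zpowers σ) ∧
      z0 ^ 2 = (z1 ^ 2 - algebraMap k K a) * (z2 ^ 2 - algebraMap k K b) *
        (z3 ^ 2 - algebraMap k K c) :=
  fixed_field_of_involution_yamasaki_general k K h2 a b c x y z hind hgen σ hσx hσy hσz

end Paper
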